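/- For m ≥ 1, one has m_*(p_*(m)) = m, where m_*(p) := (1 + p + 2p²)/(2(√(p - p²) + 2p²)) for p ∈ (0, 1/2] and p_*(m) := (2m+1 - √(4(m-1)(m+2)+1))/(4(2m-1)). -/

import Mathlib

open Real

noncomputable def mStar (p : ℝ) : ℝ :=
  (1 + p + 2 * p ^ 2) / (2 * (Real.sqrt (p - p ^ 2) + 2 * p ^ 2))

noncomputable def pStar (m : ℝ) : ℝ :=
  (2 * m + 1 - Real.sqrt (4 * (m - 1) * (m + 2) + 1)) / (4 * (2 * m - 1))

/-!
Put `t = 2m - 1`. The formula for `p = p_*(m)` is the smaller root of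
`2 t² p² - t (t + 2) p + 1 = 0`, and this quadratic says exactly that
`p - p² = ((1 - t p) / t)²`. Hence `√(p - p²) = (1 - t p) / t` once `t p ≤ 1`, which turns
`m_*(p)` into a rational function of `p`; the same quadratic reduces it to `(t + 1) / 2 = m`.
-/

lemma sqrt_sub_sq_of_quadratic {t p : ℝ} (ht : 0 < t) (htp : t * p ≤ 1)
    (hq : 2 * t ^ 2 * p ^ 2 - t * (t + 2) * p + 1 = 0) :
    √(p - p ^ 2) = (1 - t * p) / t := by
  have hsq : p - p ^ 2 = ((1 - t * p) / t) ^ 2 := by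
    field_simp
    linear_combination -hq
  rw [hsq, sqrt_sq (div_nonneg (by linarith) ht.le)]

lemma mStar_of_quadratic {t p : ℝ} (ht : 0 < t) (htp : t * p ≤ 1)
    (hq : 2 * t ^ 2 * p ^ 2 - t * (t + 2) * p + 1 = 0) :
    mStar p = (t + 1) / 2 := by
  have hp : p ≠ 0 := by
    rintro rfl
    norm_num at hq
  have hden : 0 < (1 - t * p) / t + 2 * p ^ 2 := by
    have : 0 ≤ (1 - t * p) / t := div_nonneg (by linarith) ht.le
    positivity
  rw [mStar, sqrt_sub_sq_of_quadratic ht htp hq, div_eq_iff (by positivity)]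
  field_simp
  linear_combination -hq

lemma pStar_quadratic {m : ℝ} (hm : 2 * m - 1 ≠ 0) (hD : 0 ≤ 4 * (m - 1) * (m + 2) + 1) :
    2 * (2 * m - 1) ^ 2 * pStar m ^ 2 - (2 * m - 1) * (2 * m - 1 + 2) * pStar m + 1 = 0 := by
  have hs := sq_sqrt hD
  rw [pStar]
  field_simp
  linear_combination 2 * hs

lemma mul_pStar_le_one {m : ℝ} (hm : 1 ≤ m) : (2 * m - 1) * pStar m ≤ 1 := by
  have hD : 0 ≤ 4 * (m - 1) * (m + 2) + 1 := by nlinarith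
  have hs := sq_sqrt hD
  have hs0 := sqrt_nonneg (4 * (m - 1) * (m + 2) + 1)
  rw [pStar, mul_div_assoc', div_le_one (by linarith)]
  nlinarith

/-- For `m ≥ 1`, `m_*(p_*(m)) = m`. -/
theorem mStar_pStar (m : ℝ) (hm : 1 ≤ m) : mStar (pStar m) = m := by
  have ht : 0 < 2 * m - 1 := by linarith
  have hD : 0 ≤ 4 * (m - 1) * (m + 2) + 1 := by nlinarith
  rw [mStar_of_quadratic ht (mul_pStar_le_one hm) (pStar_quadratic ht.ne' hD)]
  ring
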